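/- Let w ∈ S_n, let m = m_{I,J} be an elusive minor belonging to e = (i,j) ∈ E(w) with I = {i_1 < ... < i_{r+1}}, J = {j_1 < ... < j_{r+1}}, r = r_{i,j}(w). Define the matrix P ∈ Mat_{n×n}(k) with P_{a,b} = 1 if (a,b) = (i_t, j_{r-t+2}) for some 1 ≤ t ≤ r+1 and P_{a,b} = 0 otherwise. Then m does not vanish at P, but every essential minor of I_w other than m vanishes at P. -/

import Mathlib

/-- Rank function of a permutation: `rk w i j = #{a : 1 ≤ a ≤ i, w a ≤ j}`. -/
def rk (w : Equiv.Perm ℕ) (i j : ℕ) : ℕ :=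
  ((Finset.Icc 1 i).filter (fun a => w a ≤ j)).card

/-- `(i,j)` is in the Rothe diagram `D(w)`. -/
def inRothe (w : Equiv.Perm ℕ) (i j : ℕ) : Prop :=
  j < w i ∧ i < w.symm j

instance (w : Equiv.Perm ℕ) (i j : ℕ) : Decidable (inRothe w i j) := by
  unfold inRothe; infer_instance

/-- `(i,j)` is in Fulton's essential set `E(w)`. -/
def inEss (w : Equiv.Perm ℕ) (i j : ℕ) : Prop :=
  inRothe w i j ∧ ¬ inRothe w (i+1) j ∧ ¬ inRothe w i (j+1)

/-- The minor with row set `I` and column set `J` belongs to `(i,j) ∈ E(w)`. -/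
def belongsTo (w : Equiv.Perm ℕ) (I J : Finset ℕ) (i j : ℕ) : Prop :=
  inEss w i j ∧ I ⊆ Finset.Icc 1 i ∧ J ⊆ Finset.Icc 1 j ∧
    I.card = rk w i j + 1 ∧ J.card = rk w i j + 1

/-- The minor `m_{I,J}` attends `M^{[i',j']}`. -/
def attends (w : Equiv.Perm ℕ) (I J : Finset ℕ) (i' j' : ℕ) : Prop :=
  (rk w i' j' < (I ∩ Finset.Icc 1 i').card ∧ (J ∩ Finset.Icc 1 j').card = J.card) ∨
  ((I ∩ Finset.Icc 1 i').card = I.card ∧ rk w i' j' < (J ∩ Finset.Icc 1 j').card)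

/-- The minor `m_{I,J}` belonging to `(i,j) ∈ E(w)` is elusive. -/
def elusive (w : Equiv.Perm ℕ) (I J : Finset ℕ) (i j : ℕ) : Prop :=
  belongsTo w I J i j ∧
    ∀ i' j', inEss w i' j' → rk w i' j' < rk w i j → ¬ attends w I J i' j'

/-- The evaluation at a matrix P of the minor with row set I and column set J. -/
noncomputable def evalMinor {k : Type*} [CommRing k] (P : ℕ → ℕ → k)
    (I J : Finset ℕ) (h : J.card = I.card) : k :=
  (Matrix.of fun a b : Fin I.card =>
    P (I.orderEmbOfFin rfl a) (J.orderEmbOfFin h b)).det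

/-!
At `P` the minor `m_{I,J}` is the determinant of the reversal permutation matrix, hence `±1`.
Write `pos_I a = #(I ∩ [1,a])`, so that `P a b ≠ 0` exactly when `a ∈ I`, `b ∈ J` and
`pos_I a + pos_J b = r + 2`. A nonvanishing minor `m_{I',J'}` belonging to `(i',j')` therefore
has `I' ⊆ I`, `J' ⊆ J`, and its `r' + 1` nonzero entries along some permutation have pairwise
distinct `pos_I`-values in `[r + 2 - y, x]`, where `x = pos_I i'` and `y = pos_J j'`; hence
`x + y ≥ r + r' + 2`. If `r' ≥ r` this forces `I' = I` and `J' = J`. If `r' < r`, elusiveness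
rules out `x = r + 1` and `y = r + 1`, so `i' < i` and `j' < j`, and submodularity of the rank
gives `r_{i',j} < x` or `r_{i,j'} < y`. In the first case let `a ≤ i'` be the last row with
`w a > j`: the cell `(a, j)` lies in the Rothe diagram, and walking south-east inside the diagram
from it reaches an essential box of rank `r_{a,j} ≤ r_{i',j} < r` that `m_{I,J}` attends. The
second case is the transpose of the first.
-/

open Finset

section FixedOutside

variable {w : Equiv.Perm ℕ} {n : ℕ}

lemma symm_apply_eq_self_of_notMem_Icc (hw : ∀ a, a ∉ Icc 1 n → w a = a) (a : ℕ)
    (ha : a ∉ Icc 1 n) : w.symm a = a :=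
  w.symm_apply_eq.mpr (hw a ha).symm

lemma apply_le_max_of_notMem_Icc (hw : ∀ a, a ∉ Icc 1 n → w a = a) (a : ℕ) :
    w a ≤ max a n := by
  by_cases ha : a ∈ Icc 1 n
  · have hwa : w a ∈ Icc 1 n := by
      by_contra hwa
      exact hwa (by rwa [w.injective (hw _ hwa)])
    exact le_max_of_le_right (mem_Icc.mp hwa).2
  · exact (hw a ha).le.trans (le_max_left a n)

lemma inRothe.lt_of_notMem_Icc (hw : ∀ a, a ∉ Icc 1 n → w a = a) {c d : ℕ}
    (h : inRothe w c d) : c < n ∧ d < n := by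
  have hc := apply_le_max_of_notMem_Icc hw c
  have hd := apply_le_max_of_notMem_Icc (symm_apply_eq_self_of_notMem_Icc hw) d
  obtain ⟨hdc, hcd⟩ := h
  omega

end FixedOutside

section Rank

variable {w : Equiv.Perm ℕ}

lemma rk_south {c d : ℕ} (h : inRothe w (c + 1) d) : rk w (c + 1) d = rk w c d := by
  have hIcc : Icc 1 (c + 1) = insert (c + 1) (Icc 1 c) := by
    ext z
    simp only [mem_Icc, mem_insert]
    omega
  rw [rk, hIcc, filter_insert, if_neg (by have := h.1; omega), rk]

lemma rk_east {c d : ℕ} (h : inRothe w c (d + 1)) : rk w c (d + 1) = rk w c d := by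
  refine congrArg card (filter_congr fun a ha => ⟨fun had => ?_, fun had => by omega⟩)
  by_contra hgt
  have hwa : w a = d + 1 := by omega
  have := h.2
  rw [← hwa, Equiv.symm_apply_apply] at this
  exact this.not_ge (mem_Icc.mp ha).2

lemma rk_add_card_filter {i j j' : ℕ} (h : j' ≤ j) :
    rk w i j' + #{a ∈ Icc 1 i | w a ≤ j ∧ ¬ w a ≤ j'} = rk w i j := by
  rw [rk, rk, ← card_filter_add_card_filter_not (s := {a ∈ Icc 1 i | w a ≤ j}) (p := (w · ≤ j')),
    filter_filter, filter_filter]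
  congr 2
  exact filter_congr fun a _ => ⟨fun ha => ⟨ha.trans h, ha⟩, And.right⟩

lemma rk_add_rk_le {i i' j j' : ℕ} (hi : i' ≤ i) (hj : j' ≤ j) :
    rk w i' j + rk w i j' ≤ rk w i j + rk w i' j' := by
  rw [← rk_add_card_filter (i := i) hj, ← rk_add_card_filter (i := i') hj]
  have : #{a ∈ Icc 1 i' | w a ≤ j ∧ ¬ w a ≤ j'} ≤ #{a ∈ Icc 1 i | w a ≤ j ∧ ¬ w a ≤ j'} :=
    card_le_card (filter_subset_filter _ (Icc_subset_Icc_right hi))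
  omega

lemma one_le_apply_of_apply_zero (h0 : w 0 = 0) {a : ℕ} (ha : 1 ≤ a) : 1 ≤ w a :=
  Nat.one_le_iff_ne_zero.mpr fun hwa => by
    have := w.injective (hwa.trans h0.symm)
    omega

lemma rk_symm (h0 : w 0 = 0) (i j : ℕ) : rk w.symm j i = rk w i j := by
  have h0' : w.symm 0 = 0 := w.symm_apply_eq.mpr h0.symm
  refine card_bij' (fun b _ => w.symm b) (fun a _ => w a) (fun b hb => ?_) (fun a ha => ?_)
    (fun b _ => by simp) (fun a _ => by simp)
  · simp only [mem_filter, mem_Icc] at hb ⊢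
    exact ⟨⟨one_le_apply_of_apply_zero h0' hb.1.1, hb.2⟩, by simpa using hb.1.2⟩
  · simp only [mem_filter, mem_Icc] at ha ⊢
    exact ⟨⟨one_le_apply_of_apply_zero h0 ha.1.1, ha.2⟩, by simpa using ha.1.2⟩

lemma inRothe_symm {i j : ℕ} : inRothe w.symm j i ↔ inRothe w i j := by
  rw [inRothe, inRothe, Equiv.symm_symm, and_comm]

lemma inEss_symm {i j : ℕ} : inEss w.symm j i ↔ inEss w i j := by
  rw [inEss, inEss, inRothe_symm, inRothe_symm, inRothe_symm]
  tauto

lemma attends_symm (h0 : w 0 = 0) {I J : Finset ℕ} {i j : ℕ} :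
    attends w.symm J I j i ↔ attends w I J i j := by
  rw [attends, attends, rk_symm h0]
  tauto

end Rank

lemma card_inter_Icc_le_add (I : Finset ℕ) (a b : ℕ) :
    #(I ∩ Icc 1 b) ≤ #(I ∩ Icc 1 a) + (b - a) := by
  have hsub : I ∩ Icc 1 b ⊆ (I ∩ Icc 1 a) ∪ Ioc a b := by
    intro z hz
    simp only [mem_inter, mem_Icc, mem_union, mem_Ioc] at hz ⊢
    rcases le_or_gt z a with hza | hza
    · exact Or.inl ⟨hz.1, hz.2.1, hza⟩
    · exact Or.inr ⟨hza, hz.2.2⟩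
  calc #(I ∩ Icc 1 b) ≤ #((I ∩ Icc 1 a) ∪ Ioc a b) := card_le_card hsub
    _ ≤ #(I ∩ Icc 1 a) + (b - a) := by
      simpa only [Nat.card_Ioc] using card_union_le (I ∩ Icc 1 a) (Ioc a b)

section Essential

variable {w : Equiv.Perm ℕ} {n : ℕ}

lemma exists_inEss_of_inRothe (hw : ∀ a, a ∉ Icc 1 n → w a = a) {c d : ℕ}
    (h : inRothe w c d) : ∃ e f, inEss w e f ∧ c ≤ e ∧ d ≤ f ∧ rk w e f = rk w c d := by
  let T := (range n ×ˢ range n).filter fun p =>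
    inRothe w p.1 p.2 ∧ c ≤ p.1 ∧ d ≤ p.2 ∧ rk w p.1 p.2 = rk w c d
  have hmem : ∀ {e f}, inRothe w e f → c ≤ e → d ≤ f → rk w e f = rk w c d → (e, f) ∈ T :=
    fun hef hce hdf hrk => mem_filter.mpr ⟨mem_product.mpr ⟨mem_range.mpr
      (hef.lt_of_notMem_Icc hw).1, mem_range.mpr (hef.lt_of_notMem_Icc hw).2⟩, hef, hce, hdf, hrk⟩
  obtain ⟨⟨e, f⟩, hT, hmax⟩ :=
    T.exists_max_image (fun p => p.1 + p.2) ⟨(c, d), hmem h le_rfl le_rfl rfl⟩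
  obtain ⟨-, hef, hce, hdf, hrk⟩ := mem_filter.mp hT
  refine ⟨e, f, ⟨hef, fun hs => ?_, fun he => ?_⟩, hce, hdf, hrk⟩
  · have := hmax _ (hmem hs (by omega) hdf (by rw [rk_south hs, hrk]))
    omega
  · have := hmax _ (hmem he hce (by omega) (by rw [rk_east he, hrk]))
    omega

lemma exists_inRothe_rk_eq_add {i' j : ℕ} (hi' : i' < w.symm j) (hrk : rk w i' j < i') :
    ∃ a ≤ i', inRothe w a j ∧ rk w i' j = rk w a j + (i' - a) := by
  let B := {a ∈ Icc 1 i' | j < w a}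
  have hB : B.Nonempty := by
    by_contra hB
    have hall : ∀ a ∈ Icc 1 i', w a ≤ j := fun a ha =>
      not_lt.mp fun hja => hB ⟨a, mem_filter.mpr ⟨ha, hja⟩⟩
    rw [rk, filter_true_of_mem hall, Nat.card_Icc] at hrk
    omega
  obtain ⟨haIcc, hja⟩ := mem_filter.mp (B.max'_mem hB)
  set a := B.max' hB
  have ha := mem_Icc.mp haIcc
  have hIcc : Icc 1 i' = Icc 1 a ∪ Ioc a i' := by
    ext z
    simp only [mem_union, mem_Icc, mem_Ioc]
    omega
  have hdisj : Disjoint (Icc 1 a) (Ioc a i') := disjoint_left.mpr fun z hz hz' => by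
    simp only [mem_Icc, mem_Ioc] at hz hz'
    omega
  have hlast : ∀ b ∈ Ioc a i', w b ≤ j := fun b hb => not_lt.mp fun hjb => by
    have hb := mem_Ioc.mp hb
    have := B.le_max' b (mem_filter.mpr ⟨mem_Icc.mpr ⟨by omega, hb.2⟩, hjb⟩)
    omega
  refine ⟨a, ha.2, ⟨hja, by omega⟩, ?_⟩
  rw [rk, hIcc, filter_union, card_union_of_disjoint
    (disjoint_filter_filter hdisj), filter_true_of_mem hlast, Nat.card_Ioc, rk]

lemma exists_inEss_attends_of_rk_lt_left (hw : ∀ a, a ∉ Icc 1 n → w a = a)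
    {I J : Finset ℕ} {i' j : ℕ} (hi' : i' < w.symm j) (hJ : J ⊆ Icc 1 j)
    (hrk : rk w i' j < #(I ∩ Icc 1 i')) :
    ∃ e f, inEss w e f ∧ rk w e f ≤ rk w i' j ∧ attends w I J e f := by
  have hle : #(I ∩ Icc 1 i') ≤ i' := by
    simpa using card_le_card (inter_subset_right (s₁ := I) (s₂ := Icc 1 i'))
  obtain ⟨a, hai', ha, hrka⟩ := exists_inRothe_rk_eq_add hi' (by omega)
  obtain ⟨e, f, hef, hae, hjf, hrke⟩ := exists_inEss_of_inRothe hw ha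
  have hIa := card_inter_Icc_le_add I a i'
  have hIe : #(I ∩ Icc 1 a) ≤ #(I ∩ Icc 1 e) :=
    card_le_card (inter_subset_inter_left (Icc_subset_Icc_right hae))
  have hJf : J ∩ Icc 1 f = J := inter_eq_left.mpr (hJ.trans (Icc_subset_Icc_right hjf))
  exact ⟨e, f, hef, by omega, Or.inl ⟨by omega, by rw [hJf]⟩⟩

lemma exists_inEss_attends_of_rk_lt_right (hw : ∀ a, a ∉ Icc 1 n → w a = a)
    {I J : Finset ℕ} {i j' : ℕ} (hj' : j' < w i) (hI : I ⊆ Icc 1 i)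
    (hrk : rk w i j' < #(J ∩ Icc 1 j')) :
    ∃ e f, inEss w e f ∧ rk w e f ≤ rk w i j' ∧ attends w I J e f := by
  have h0 : w 0 = 0 := hw 0 (by simp)
  obtain ⟨f, e, hfe, hrkfe, hatt⟩ := exists_inEss_attends_of_rk_lt_left
    (symm_apply_eq_self_of_notMem_Icc hw) (by simpa using hj') hI (by rwa [rk_symm h0])
  rw [rk_symm h0, rk_symm h0] at hrkfe
  exact ⟨e, f, inEss_symm.mp hfe, hrkfe, (attends_symm h0).mp hatt⟩

lemma elusive.rk_le (hw : ∀ a, a ∉ Icc 1 n → w a = a) {I J : Finset ℕ} {i j i' j' : ℕ}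
    (hel : elusive w I J i j) (hess' : inEss w i' j')
    (hxy : rk w i j + rk w i' j' + 2 ≤ #(I ∩ Icc 1 i') + #(J ∩ Icc 1 j')) :
    rk w i j ≤ rk w i' j' := by
  obtain ⟨⟨hess, hI, hJ, hIc, hJc⟩, hnot⟩ := hel
  by_contra! hlt
  have hx : #(I ∩ Icc 1 i') ≤ #I := card_le_card inter_subset_left
  have hy : #(J ∩ Icc 1 j') ≤ #J := card_le_card inter_subset_left
  have hnat := hnot i' j' hess' hlt
  have hx' : #(I ∩ Icc 1 i') < #I := hx.lt_of_ne fun hxI => hnat (Or.inr ⟨hxI, by omega⟩)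
  have hy' : #(J ∩ Icc 1 j') < #J := hy.lt_of_ne fun hyJ => hnat (Or.inl ⟨by omega, hyJ⟩)
  have hi' : i' < i := not_le.mp fun hii' =>
    hx'.ne (by rw [inter_eq_left.mpr (hI.trans (Icc_subset_Icc_right hii'))])
  have hj' : j' < j := not_le.mp fun hjj' =>
    hy'.ne (by rw [inter_eq_left.mpr (hJ.trans (Icc_subset_Icc_right hjj'))])
  have hsub := rk_add_rk_le (w := w) hi'.le hj'.le
  by_cases hrk : rk w i' j < #(I ∩ Icc 1 i')
  · obtain ⟨e, f, hef, hle, hatt⟩ :=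
      exists_inEss_attends_of_rk_lt_left hw (hi'.trans hess.1.2) hJ hrk
    exact hnot e f hef (by omega) hatt
  · have hrk' : rk w i j' < #(J ∩ Icc 1 j') := by omega
    obtain ⟨e, f, hef, hle, hatt⟩ :=
      exists_inEss_attends_of_rk_lt_right hw (hj'.trans hess.1.1) hI hrk'
    exact hnot e f hef (by omega) hatt

end Essential

lemma card_inter_Icc_orderEmbOfFin {s : Finset ℕ} (hs : ∀ z ∈ s, 1 ≤ z) {c : ℕ}
    (hc : #s = c) (t : Fin c) : #(s ∩ Icc 1 (s.orderEmbOfFin hc t)) = t + 1 := by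
  have himg :
      s ∩ Icc 1 (s.orderEmbOfFin hc t) = (Iic t).map (s.orderEmbOfFin hc).toEmbedding := by
    ext z
    simp only [mem_inter, mem_Icc, mem_map, mem_Iic, RelEmbedding.coe_toEmbedding]
    constructor
    · rintro ⟨hz, -, hzt⟩
      obtain ⟨u, rfl⟩ : z ∈ Set.range (s.orderEmbOfFin hc) := by rwa [range_orderEmbOfFin]
      exact ⟨u, (s.orderEmbOfFin hc).le_iff_le.mp hzt, rfl⟩
    · rintro ⟨u, hut, rfl⟩
      have hu := s.orderEmbOfFin_mem hc u
      exact ⟨hu, hs _ hu, (s.orderEmbOfFin hc).le_iff_le.mpr hut⟩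
  rw [himg, card_map, Fin.card_Iic]

lemma injOn_card_inter_Icc {s : Finset ℕ} (hs : ∀ z ∈ s, 1 ≤ z) :
    Set.InjOn (fun a => #(s ∩ Icc 1 a)) s := by
  refine StrictMonoOn.injOn fun a _ b hb hab => card_lt_card ?_
  refine (ssubset_iff_of_subset (inter_subset_inter_left (Icc_subset_Icc_right hab.le))).mpr
    ⟨b, ?_, ?_⟩ <;> simp only [mem_inter, mem_Icc]
  · exact ⟨hb, hs b hb, le_rfl⟩
  · omega

lemma card_le_of_injOn_of_add_eq {α : Type*} {s : Finset α} {f g : α → ℕ} {x y N : ℕ}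
    (hf : Set.InjOn f s) (hfx : ∀ a ∈ s, f a ≤ x) (hgy : ∀ a ∈ s, g a ≤ y)
    (hfg : ∀ a ∈ s, f a + g a = N) : #s ≤ x + y + 1 - N := by
  have hmaps : Set.MapsTo f s (Icc (N - y) x) := fun a ha => by
    have := hfx a ha
    have := hgy a ha
    have := hfg a ha
    simp only [coe_Icc, Set.mem_Icc]
    omega
  have := card_le_card_of_injOn f hmaps hf
  rw [Nat.card_Icc] at this
  omega

lemma Matrix.exists_perm_forall_ne_zero_of_det_ne_zero {m R : Type*} [Fintype m]
    [DecidableEq m] [CommRing R] {M : Matrix m m R} (h : M.det ≠ 0) :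
    ∃ σ : Equiv.Perm m, ∀ t, M (σ t) t ≠ 0 := by
  rw [Matrix.det_apply] at h
  obtain ⟨σ, -, hσ⟩ := exists_ne_zero_of_sum_ne_zero h
  refine ⟨σ, fun t ht => hσ ?_⟩
  rw [prod_eq_zero (f := fun i => M (σ i) i) (mem_univ t) ht, smul_zero]

/-- With `a = i_s` and `b = j_t` the condition reads `s + t = N`; for `N = r + 2` this is the
point `P` of the statement. -/
def antidiagonalPoint (k : Type*) [Zero k] [One k] (I J : Finset ℕ) (N a b : ℕ) : k :=
  if a ∈ I ∧ b ∈ J ∧ #(I ∩ Icc 1 a) + #(J ∩ Icc 1 b) = N then 1 else 0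

section AntidiagonalPoint

variable {k : Type*} [CommRing k] {I J : Finset ℕ} {N : ℕ}

lemma of_antidiagonalPoint_ne_zero {a b : ℕ} (h : antidiagonalPoint k I J N a b ≠ 0) :
    a ∈ I ∧ b ∈ J ∧ #(I ∩ Icc 1 a) + #(J ∩ Icc 1 b) = N :=
  by_contra fun hc => h (if_neg hc)

lemma evalMinor_antidiagonalPoint_ne_zero [Nontrivial k] (hI : ∀ z ∈ I, 1 ≤ z)
    (hJ : ∀ z ∈ J, 1 ≤ z) (h : #J = #I) :
    evalMinor (antidiagonalPoint k I J (#I + 1)) I J h ≠ 0 := by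
  have hM : (Matrix.of fun a b : Fin #I => antidiagonalPoint k I J (#I + 1)
      (I.orderEmbOfFin rfl a) (J.orderEmbOfFin h b)) = Fin.revPerm.permMatrix k := by
    ext a b
    rw [Matrix.of_apply, antidiagonalPoint, card_inter_Icc_orderEmbOfFin hI,
      card_inter_Icc_orderEmbOfFin hJ, Equiv.Perm.permMatrix, PEquiv.toMatrix_apply,
      Equiv.toPEquiv_apply, Fin.revPerm_apply]
    simp only [orderEmbOfFin_mem, true_and, Option.mem_some_iff, Fin.ext_iff, Fin.val_rev]
    congr 1
    apply propext
    omega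
  rw [evalMinor, hM, Matrix.det_permutation]
  rcases Int.units_eq_one_or (Equiv.Perm.sign (Fin.revPerm : Equiv.Perm (Fin #I))) with hs | hs
    <;> simp [hs]

lemma subset_and_card_le_of_evalMinor_antidiagonalPoint_ne_zero (hI : ∀ z ∈ I, 1 ≤ z)
    {I' J' : Finset ℕ} {i' j' : ℕ} (hI' : I' ⊆ Icc 1 i') (hJ' : J' ⊆ Icc 1 j')
    (h' : #J' = #I') (hm : evalMinor (antidiagonalPoint k I J N) I' J' h' ≠ 0) :
    I' ⊆ I ∧ J' ⊆ J ∧ #I' ≤ #(I ∩ Icc 1 i') + #(J ∩ Icc 1 j') + 1 - N := by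
  obtain ⟨σ, hσ⟩ := Matrix.exists_perm_forall_ne_zero_of_det_ne_zero hm
  set row := fun t => I'.orderEmbOfFin rfl (σ t)
  set col := fun t => J'.orderEmbOfFin h' t
  have hent : ∀ t, row t ∈ I ∧ col t ∈ J ∧ #(I ∩ Icc 1 (row t)) + #(J ∩ Icc 1 (col t)) = N :=
    fun t => of_antidiagonalPoint_ne_zero (hσ t)
  refine ⟨fun z hz => ?_, fun z hz => ?_, ?_⟩
  · obtain ⟨u, rfl⟩ : z ∈ Set.range (I'.orderEmbOfFin rfl) := by rwa [range_orderEmbOfFin]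
    simpa [row] using (hent (σ.symm u)).1
  · obtain ⟨u, rfl⟩ : z ∈ Set.range (J'.orderEmbOfFin h') := by rwa [range_orderEmbOfFin]
    exact (hent u).2.1
  · have hinj : Set.InjOn (fun t => #(I ∩ Icc 1 (row t))) (univ : Finset (Fin #I')) :=
      (injOn_card_inter_Icc hI).comp (fun t _ u _ htu =>
          σ.injective ((I'.orderEmbOfFin rfl).injective htu))
        fun t _ => (hent t).1
    have hrow : ∀ t, row t ≤ i' := fun t => (mem_Icc.mp (hI' (orderEmbOfFin_mem _ _ _))).2
    have hcol : ∀ t, col t ≤ j' := fun t => (mem_Icc.mp (hJ' (orderEmbOfFin_mem _ _ _))).2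
    simpa using card_le_of_injOn_of_add_eq hinj
      (fun t _ => card_le_card (inter_subset_inter_left (Icc_subset_Icc_right (hrow t))))
      (fun t _ => card_le_card (inter_subset_inter_left (Icc_subset_Icc_right (hcol t))))
      (fun t _ => (hent t).2.2)

end AntidiagonalPoint

/-- for an elusive minor m_{I,J} belonging to (i,j), the antidiagonal
point P (with 1's at (i_t, j_{r-t+2})) is a point where m_{I,J} does not vanish but
every other essential minor vanishes. -/
theorem elusive_witness_point (k : Type*) [Field k]
    (n : ℕ) (w : Equiv.Perm ℕ) (hw : ∀ a, a ∉ Finset.Icc 1 n → w a = a)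
    (I J : Finset ℕ) (i j : ℕ) (h : J.card = I.card)
    (hel : elusive w I J i j)
    (P : ℕ → ℕ → k)
    (hP : ∀ a b : ℕ, P a b =
      if a ∈ I ∧ b ∈ J ∧
          (I ∩ Finset.Icc 1 a).card + (J ∩ Finset.Icc 1 b).card = rk w i j + 2
        then 1 else 0) :
    evalMinor P I J h ≠ 0 ∧
    ∀ (i' j' : ℕ) (I' J' : Finset ℕ) (h' : J'.card = I'.card),
      belongsTo w I' J' i' j' → ¬(I' = I ∧ J' = J) →
      evalMinor P I' J' h' = 0 := by
  obtain rfl : P = antidiagonalPoint k I J (rk w i j + 2) := funext fun a => funext (hP a)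
  obtain ⟨hess, hIi, hJj, hIc, hJc⟩ := hel.1
  have hIpos : ∀ z ∈ I, 1 ≤ z := fun z hz => (mem_Icc.mp (hIi hz)).1
  have hJpos : ∀ z ∈ J, 1 ≤ z := fun z hz => (mem_Icc.mp (hJj hz)).1
  refine ⟨?_, fun i' j' I' J' h' ⟨hess', hI'i, hJ'j, hI'c, hJ'c⟩ hne => ?_⟩
  · rw [show rk w i j + 2 = #I + 1 by omega]
    exact evalMinor_antidiagonalPoint_ne_zero hIpos hJpos h
  · by_contra hm
    obtain ⟨hI'I, hJ'J, hcard⟩ :=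
      subset_and_card_le_of_evalMinor_antidiagonalPoint_ne_zero hIpos hI'i hJ'j h' hm
    have hx : #(I ∩ Icc 1 i') ≤ #I := card_le_card inter_subset_left
    have hy : #(J ∩ Icc 1 j') ≤ #J := card_le_card inter_subset_left
    have hrk := hel.rk_le hw hess' (by omega)
    exact hne ⟨eq_of_subset_of_card_le hI'I (by omega), eq_of_subset_of_card_le hJ'J (by omega)⟩
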